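/- arXiv:2009.13631 — 2 statements merged into one kernel-verified Lean document; each statement's English description precedes it below -/
import Mathlib

section
/- Let T be a natural number, i, j : Fin T with i < j, c : ℝ with c > 0, x : Fin T → ℝ, and weights w : Fin T → ℝ satisfying w i < w j. Define y : Fin T → ℝ by y j = x j - c, y i = x i + c, and y k = x k for all k ∉ {i, j}. Then ∑_{k} w k * y k < ∑_{k} w k * x k. That is, when later time points carry strictly larger weights, moving a positive amount of cost from a later time point to a strictly earlier one strictly decreases the weighted-sum cost. -/
/-- When the later time point carries a strictly larger weight, moving a
positive amount of cost from the later time point to a strictly earlier one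
strictly decreases the weighted-sum cost. -/
theorem weightedCost_move_cost_earlier (T : ℕ) (i j : Fin T) (hij : i < j)
    (c : ℝ) (hc : 0 < c) (x w : Fin T → ℝ) (hw : w i < w j)
    (y : Fin T → ℝ)
    (hyj : y j = x j - c) (hyi : y i = x i + c)
    (hyk : ∀ k : Fin T, k ≠ i → k ≠ j → y k = x k) :
    ∑ k, w k * y k < ∑ k, w k * x k := by
  have hne : i ≠ j := ne_of_lt hij
  have key : ∑ k, w k * y k - ∑ k, w k * x k = (w i - w j) * c := by
    rw [← Finset.sum_sub_distrib]
    have : ∀ k ∈ Finset.univ, w k * y k - w k * x k =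
        (if k = i then w i * c else 0) + (if k = j then -(w j * c) else 0) := by
      intro k _
      by_cases h1 : k = i
      · subst h1; simp [hyi, hne, hne.symm]; ring
      · by_cases h2 : k = j
        · subst h2; simp [hyj, h1]; ring
        · simp [hyk k h1 h2, h1, h2]
    rw [Finset.sum_congr rfl this, Finset.sum_add_distrib]
    simp [Finset.sum_ite_eq']
    ring
  nlinarith [key]
end

section
/- Let α and β be types and p : α → β → Prop a decidable join predicate. Model bag relations with signed multiplicities as finitely supported functions: for f : α →₀ ℤ and g : β →₀ ℤ, define the inner join J(f, g) : α × β →₀ ℤ by J(f, g)(a, b) = f a * g b if p a b holds, and 0 otherwise. Then for all f, Δf : α →₀ ℤ and g, Δg : β →₀ ℤ: J(f + Δf, g + Δg) = J(f, g) + J(Δf, g) + J(f, Δg) + J(Δf, Δg). -/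
/-- Inner join of two bag relations with signed (integer) multiplicities:
the multiplicity of the pair `(a, b)` is `f a * g b` when the join predicate
`p a b` holds, and `0` otherwise. -/
noncomputable def innerJoin {α β : Type*} (p : α → β → Prop) [∀ a b, Decidable (p a b)]
    (f : α →₀ ℤ) (g : β →₀ ℤ) : α × β →₀ ℤ :=
  Finsupp.onFinset (f.support ×ˢ g.support)
    (fun ab => if p ab.1 ab.2 then f ab.1 * g ab.2 else 0)
    (fun ab hab => by
      rw [Finset.mem_product]
      simp only [Finsupp.mem_support_iff]
      try dsimp only at hab
      split_ifs at hab with h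
      · exact mul_ne_zero_iff.mp hab
      · exact absurd rfl hab)

section

variable {α β : Type*} (p : α → β → Prop) [∀ a b, Decidable (p a b)]

theorem innerJoin_apply (f : α →₀ ℤ) (g : β →₀ ℤ) (ab : α × β) :
    innerJoin p f g ab = if p ab.1 ab.2 then f ab.1 * g ab.2 else 0 :=
  Finsupp.onFinset_apply

theorem innerJoin_add_left (f₁ f₂ : α →₀ ℤ) (g : β →₀ ℤ) :
    innerJoin p (f₁ + f₂) g = innerJoin p f₁ g + innerJoin p f₂ g := by
  ext ab
  simp only [Finsupp.add_apply, innerJoin_apply]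
  split_ifs <;> ring

theorem innerJoin_add_right (f : α →₀ ℤ) (g₁ g₂ : β →₀ ℤ) :
    innerJoin p f (g₁ + g₂) = innerJoin p f g₁ + innerJoin p f g₂ := by
  ext ab
  simp only [Finsupp.add_apply, innerJoin_apply]
  split_ifs <;> ring

end

/-- The delta rule for inner join: the inner join is bilinear over the
multiplicity-adding merge operator `+#`, i.e.
`(f + Δf) ⋈ (g + Δg) = f ⋈ g + Δf ⋈ g + f ⋈ Δg + Δf ⋈ Δg`. -/
theorem innerJoin_add_add {α β : Type*} (p : α → β → Prop) [∀ a b, Decidable (p a b)]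
    (f Δf : α →₀ ℤ) (g Δg : β →₀ ℤ) :
    innerJoin p (f + Δf) (g + Δg) =
      innerJoin p f g + innerJoin p Δf g + innerJoin p f Δg + innerJoin p Δf Δg := by
  rw [innerJoin_add_left, innerJoin_add_right, innerJoin_add_right]
  abel
end
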